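/- arXiv:2302.14280 — 2 statements merged into one kernel-verified Lean document; each statement's English description precedes it below -/
import Mathlib

section
/- A Pierce sequence σ ∈ Σ fails to be realizable (i.e., is not the digit sequence of any x ∈ [0,1]) if and only if σ ∈ Σ_n for some n ≥ 2 and σ_{n-1} + 1 = σ_n. -/
open scoped BigOperators

/-- Reciprocal of an extended natural number as a real, with `1/∞ = 0`. -/
noncomputable def pinv (a : ℕ∞) : ℝ := ((a.toNat : ℕ) : ℝ)⁻¹

/-- First Pierce digit: `⌊1/x⌋` for `x ≠ 0`, and `∞` for `x = 0`. -/
noncomputable def pd1 (x : ℝ) : ℕ∞ := if x = 0 then ⊤ else (⌊x⁻¹⌋₊ : ℕ∞)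

/-- Pierce map `T(x) = 1 - ⌊1/x⌋ x` for `x ≠ 0`, `T(0) = 0`. -/
noncomputable def pT (x : ℝ) : ℝ := if x = 0 then 0 else 1 - (⌊x⁻¹⌋₊ : ℝ) * x

/-- `n`-th Pierce digit `d_n(x) = d_1(T^{n-1} x)` (for `n ≥ 1`). -/
noncomputable def pdig (n : ℕ) (x : ℝ) : ℕ∞ := pd1 (pT^[n-1] x)

/-- `1/(d_1(x) ⋯ d_n(x))`, with the convention that a factor `∞` makes it `0`. -/
noncomputable def pprodR (n : ℕ) (x : ℝ) : ℝ := ∏ k ∈ Finset.Icc 1 n, pinv (pdig k x)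

/-- `n`-th partial sum `s_n(x)` of the Pierce expansion of `x`. -/
noncomputable def psum (n : ℕ) (x : ℝ) : ℝ :=
  ∑ k ∈ Finset.Icc 1 n, (-1 : ℝ) ^ (k + 1) * pprodR k x

/-- The error-sum function of Pierce expansions `E(x) = Σ_{n≥1} (x - s_n(x))`. -/
noncomputable def pE (x : ℝ) : ℝ := ∑' n : ℕ, (x - psum (n + 1) x)

/-- A Pierce sequence (0-indexed: `σ k` is the paper's `σ_{k+1}`): terms are positive, strictly
increasing while finite, and once a term is `∞` all later terms are `∞`. -/
def IsPierce (σ : ℕ → ℕ∞) : Prop :=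
  1 ≤ σ 0 ∧ ∀ n, σ n < σ (n + 1) ∨ (σ n = ⊤ ∧ σ (n + 1) = ⊤)

/-- `n`-th partial sum `φ_n(σ)`. -/
noncomputable def pphiN (n : ℕ) (σ : ℕ → ℕ∞) : ℝ :=
  ∑ k ∈ Finset.range n, (-1 : ℝ) ^ k * ∏ i ∈ Finset.range (k + 1), pinv (σ i)

/-- `φ(σ) = Σ_{k≥1} (-1)^{k+1}/(σ_1 ⋯ σ_k)`. -/
noncomputable def pphi (σ : ℕ → ℕ∞) : ℝ :=
  ∑' k : ℕ, (-1 : ℝ) ^ k * ∏ i ∈ Finset.range (k + 1), pinv (σ i)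

/-- The error-sum function of Pierce sequences `E*(σ) = Σ_{n≥1} (φ(σ) - φ_n(σ))`. -/
noncomputable def pEstar (σ : ℕ → ℕ∞) : ℝ := ∑' n : ℕ, (pphi σ - pphiN (n + 1) σ)

/-- The series formula `Σ_{n≥1} (-1)^n n/(σ_1 ⋯ σ_{n+1})` for the error-sum of a sequence. -/
noncomputable def pEstarSeries (σ : ℕ → ℕ∞) : ℝ :=
  ∑' n : ℕ, (-1 : ℝ) ^ (n + 1) * (n + 1) * ∏ i ∈ Finset.range (n + 2), pinv (σ i)

/-- The metric `ρ(x,y) = 1/x + 1/y` for `x ≠ y` (with `1/∞ = 0`), `ρ(x,x) = 0`. -/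
noncomputable def prho (x y : ℕ∞) : ℝ := if x = y then 0 else pinv x + pinv y

/-- The metric `ρ^ℕ(σ,τ) = Σ_{n≥1} ρ(σ_n, τ_n)/n!` on sequences. -/
noncomputable def prhoN (σ τ : ℕ → ℕ∞) : ℝ :=
  ∑' n : ℕ, prho (σ n) (τ n) / ((n + 1).factorial : ℝ)

/-- A Pierce sequence is realizable if it is the digit sequence of some `x ∈ [0,1]`. -/
def Realizable (σ : ℕ → ℕ∞) : Prop :=
  ∃ x ∈ Set.Icc (0 : ℝ) 1, ∀ k : ℕ, pdig (k + 1) x = σ k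

/-!
The natural preimage of `σ` is `x = φ(σ)`. Alternating-series bounds give `0 ≤ φ(σ) ≤ 1/σ_1`
and `φ(σ) = (1 - φ(σ'))/σ_1` for the tail `σ'`. The first Pierce digit of `x` is then `σ_1`,
and `T x = φ(σ')`, as soon as `1/(σ_1 + 1) < φ(σ)`, i.e. `φ(σ') < 1/(σ_1 + 1)`; this fails only
when `σ` starts with `σ_1, σ_1 + 1, ∞`. So if that pattern never occurs, induction along the
tails shows that `x` realizes `σ`. Conversely, digits `a, a + 1` at `y` force
`T² y = a ((a + 1) y - 1) > 0`, so the next digit cannot be `∞`.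
-/

open Finset

lemma pinv_nonneg (a : ℕ∞) : 0 ≤ pinv a := by
  unfold pinv
  positivity

@[simp]
lemma pinv_top : pinv ⊤ = 0 := by simp [pinv]

@[simp]
lemma pinv_natCast (n : ℕ) : pinv n = (n : ℝ)⁻¹ := by simp [pinv]

lemma pinv_pos {a : ℕ∞} (h0 : a ≠ 0) (ht : a ≠ ⊤) : 0 < pinv a := by
  have : a.toNat ≠ 0 := by simp [h0, ht]
  unfold pinv
  positivity

lemma pinv_le_one (a : ℕ∞) : pinv a ≤ 1 := by
  unfold pinv
  rcases Nat.eq_zero_or_pos a.toNat with h | h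
  · simp [h]
  · exact inv_le_one_of_one_le₀ (by exact_mod_cast h)

lemma pinv_anti {a b : ℕ∞} (ha : a ≠ 0) (h : a ≤ b) : pinv b ≤ pinv a := by
  induction b using ENat.recTopCoe with
  | top => simpa using pinv_nonneg a
  | coe m =>
    lift a to ℕ using ne_top_of_le_ne_top (ENat.natCast_ne_top m) h
    have ha : (0 : ℝ) < a := by exact_mod_cast Nat.pos_of_ne_zero (by exact_mod_cast ha)
    simpa using inv_anti₀ ha (by exact_mod_cast h)

lemma pinv_strictAnti {a b : ℕ∞} (ha : a ≠ 0) (ha' : a ≠ ⊤) (h : a < b) : pinv b < pinv a := by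
  induction b using ENat.recTopCoe with
  | top => simpa using pinv_pos ha ha'
  | coe m =>
    lift a to ℕ using ha'
    have ha : (0 : ℝ) < a := by exact_mod_cast Nat.pos_of_ne_zero (by exact_mod_cast ha)
    simpa using inv_strictAnti₀ ha (by exact_mod_cast h)

/-- `1/(σ_1 ⋯ σ_{k+1})` in the paper's indexing, the `k`-th term of `pphi σ` without its sign. -/
noncomputable def pinvProd (σ : ℕ → ℕ∞) (k : ℕ) : ℝ := ∏ i ∈ range (k + 1), pinv (σ i)

lemma pphi_eq_tsum (σ : ℕ → ℕ∞) : pphi σ = ∑' k, (-1 : ℝ) ^ k * pinvProd σ k := rfl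

lemma pinvProd_antitone (σ : ℕ → ℕ∞) : Antitone (pinvProd σ) := by
  refine antitone_nat_of_succ_le fun k => ?_
  rw [pinvProd, prod_range_succ]
  exact mul_le_of_le_one_right (prod_nonneg fun i _ => pinv_nonneg _) (pinv_le_one _)

lemma pphi_eq_zero_of_apply_zero_eq_top {σ : ℕ → ℕ∞} (h : σ 0 = ⊤) : pphi σ = 0 := by
  simp [pphi_eq_tsum, pinvProd, prod_range_succ', h]

lemma pd1_eq_top_iff {x : ℝ} : pd1 x = ⊤ ↔ x = 0 := by
  unfold pd1
  split_ifs with h <;> simp [h]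

lemma pd1_eq_natCast_iff {a : ℕ} (ha : a ≠ 0) {x : ℝ} :
    pd1 x = a ↔ x ∈ Set.Ioc ((a + 1 : ℝ)⁻¹) (a : ℝ)⁻¹ := by
  have ha' : (0 : ℝ) < a := by exact_mod_cast Nat.pos_of_ne_zero ha
  rcases le_or_gt x 0 with hx | hx
  · have hx' : ¬ ((a + 1 : ℝ)⁻¹ < x) := fun h => (h.trans_le hx).not_ge (by positivity)
    rcases hx.eq_or_lt with rfl | hx
    · simp [pd1, hx']
    · have : ⌊x⁻¹⌋₊ = 0 := Nat.floor_of_nonpos (inv_nonpos.mpr hx.le)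
      simp [pd1, hx.ne, this, hx', (Nat.cast_ne_zero.mpr ha).symm]
  · rw [pd1, if_neg hx.ne', Nat.cast_inj, Nat.floor_eq_iff' ha, le_inv_comm₀ ha' hx,
      inv_lt_comm₀ hx (by positivity), Set.mem_Ioc, and_comm]

lemma pT_eq_of_pd1_eq {a : ℕ} {x : ℝ} (h : pd1 x = a) : pT x = 1 - a * x := by
  have hx : x ≠ 0 := fun hx => ENat.natCast_ne_top a (h ▸ pd1_eq_top_iff.mpr hx)
  rw [pd1, if_neg hx, Nat.cast_inj] at h
  rw [pT, if_neg hx, h]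

-- `y > 1/(a+1)` forces `T y < 1/(a+1)`, hence `T (T y) = 1 - (a+1) T y > 0`.
lemma pd1_pT_pT_ne_top {a : ℕ} (ha : a ≠ 0) {y : ℝ} (h1 : pd1 y = a)
    (h2 : pd1 (pT y) = (a + 1 : ℕ)) : pd1 (pT (pT y)) ≠ ⊤ := by
  have hy := ((pd1_eq_natCast_iff ha).mp h1).1
  have ha' : (0 : ℝ) < a := by exact_mod_cast Nat.pos_of_ne_zero ha
  have hpos : 0 < ((a : ℝ) + 1) * y - 1 := by
    rw [inv_lt_iff_one_lt_mul₀ (by positivity)] at hy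
    linarith
  rw [Ne, pd1_eq_top_iff, pT_eq_of_pd1_eq h2, pT_eq_of_pd1_eq h1, Nat.cast_add_one,
    show 1 - ((a : ℝ) + 1) * (1 - a * y) = a * (((a : ℝ) + 1) * y - 1) by ring]
  exact (mul_pos ha' hpos).ne'

def EndsInUnitStepAt (σ : ℕ → ℕ∞) (k : ℕ) : Prop :=
  σ k ≠ ⊤ ∧ σ (k + 1) = σ k + 1 ∧ σ (k + 2) = ⊤

lemma pdig_succ (k : ℕ) (x : ℝ) : pdig (k + 1) x = pd1 (pT^[k] x) := rfl

namespace IsPierce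

variable {σ : ℕ → ℕ∞}

lemma eq_top_of_le (hP : IsPierce σ) {m n : ℕ} (h : σ m = ⊤) (hmn : m ≤ n) : σ n = ⊤ := by
  induction n, hmn using Nat.le_induction with
  | base => exact h
  | succ n _ ih => exact (hP.2 n).elim (fun hlt => absurd (ih ▸ hlt) not_top_lt) And.right

lemma add_one_le (hP : IsPierce σ) (n : ℕ) : (n : ℕ∞) + 1 ≤ σ n := by
  induction n with
  | zero => simpa using hP.1
  | succ n ih =>
    rcases hP.2 n with h | h
    · exact_mod_cast Order.add_one_le_of_lt (ih.trans_lt h)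
    · simp [h.2]

lemma pinv_le (hP : IsPierce σ) (n : ℕ) : pinv (σ n) ≤ ((n : ℝ) + 1)⁻¹ := by
  have h := hP.add_one_le n
  rw [← Nat.cast_add_one] at h
  have := pinv_anti (Nat.cast_ne_zero.mpr n.succ_ne_zero) h
  rwa [pinv_natCast, Nat.cast_add_one] at this

lemma ne_zero (hP : IsPierce σ) (n : ℕ) : σ n ≠ 0 :=
  (zero_lt_one.trans_le (le_add_self.trans (hP.add_one_le n))).ne'

lemma ne_zero_of_apply_eq (hP : IsPierce σ) {n a : ℕ} (h : σ n = a) : a ≠ 0 :=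
  fun ha => hP.ne_zero n (by rw [h, ha, Nat.cast_zero])

lemma shift (hP : IsPierce σ) : IsPierce (fun k => σ (k + 1)) :=
  ⟨le_self_add.trans (hP.add_one_le 1), fun n => hP.2 (n + 1)⟩

lemma pinvProd_le_inv_factorial (hP : IsPierce σ) (k : ℕ) :
    pinvProd σ k ≤ ((k + 1).factorial : ℝ)⁻¹ := by
  rw [← prod_range_add_one_eq_factorial, Nat.cast_prod, ← prod_inv_distrib, pinvProd]
  exact prod_le_prod (fun i _ => pinv_nonneg _) fun i _ => by exact_mod_cast hP.pinv_le i

lemma summable_pinvProd (hP : IsPierce σ) : Summable (pinvProd σ) := by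
  have hfact : Summable fun k : ℕ => ((k + 1).factorial : ℝ)⁻¹ := by
    simpa using (summable_nat_add_iff 1).2 (Real.summable_pow_div_factorial 1)
  exact hfact.of_nonneg_of_le (fun k => prod_nonneg fun i _ => pinv_nonneg _)
    hP.pinvProd_le_inv_factorial

lemma tendsto_pphi (hP : IsPierce σ) :
    Filter.Tendsto (fun n => ∑ i ∈ range n, (-1 : ℝ) ^ i * pinvProd σ i) Filter.atTop
      (nhds (pphi σ)) :=
  hP.summable_pinvProd.tendsto_alternating_series_tsum

lemma pphi_nonneg (hP : IsPierce σ) : 0 ≤ pphi σ := by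
  simpa using (pinvProd_antitone σ).alternating_series_le_tendsto hP.tendsto_pphi 0

lemma pphi_le_pinv (hP : IsPierce σ) : pphi σ ≤ pinv (σ 0) := by
  simpa [pinvProd] using (pinvProd_antitone σ).tendsto_le_alternating_series hP.tendsto_pphi 0

lemma pphi_eq (hP : IsPierce σ) : pphi σ = pinv (σ 0) * (1 - pphi (fun k => σ (k + 1))) := by
  have hterm (k : ℕ) : (-1 : ℝ) ^ (k + 1) * pinvProd σ (k + 1) =
      -pinv (σ 0) * ((-1 : ℝ) ^ k * pinvProd (fun j => σ (j + 1)) k) := by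
    simp only [pinvProd, prod_range_succ' _ (k + 1)]
    ring
  rw [pphi_eq_tsum, hP.summable_pinvProd.alternating.tsum_eq_zero_add, tsum_congr hterm,
    tsum_mul_left, ← pphi_eq_tsum]
  simp [pinvProd]
  ring

lemma pphi_pos (hP : IsPierce σ) (h0 : σ 0 ≠ ⊤) : 0 < pphi σ := by
  have hE : pphi (fun k => σ (k + 1)) ≤ 1 / 2 := by
    have := hP.pinv_le 1
    norm_num at this
    linarith [hP.shift.pphi_le_pinv]
  rw [hP.pphi_eq]
  exact mul_pos (pinv_pos (hP.ne_zero 0) h0) (by linarith)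

-- The bound `φ ≤ 1/σ_1` for the tail is attained only by the tail `σ_1 + 1, ∞, ∞, …`.
lemma pphi_shift_lt (hP : IsPierce σ) (h0 : σ 0 ≠ ⊤) (hgap : ¬ (σ 1 = σ 0 + 1 ∧ σ 2 = ⊤)) :
    pphi (fun k => σ (k + 1)) < pinv (σ 0 + 1) := by
  have hσ0 : σ 0 + 1 ≠ 0 := by simp
  have hle : σ 0 + 1 ≤ σ 1 :=
    (hP.2 0).elim Order.add_one_le_of_lt fun h => absurd h.1 h0
  rcases hle.eq_or_lt with h1 | h1
  · have h2 : σ 2 ≠ ⊤ := fun h2 => hgap ⟨h1.symm, h2⟩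
    have hσ1 : σ 0 + 1 ≠ ⊤ := by simpa using h0
    rw [hP.shift.pphi_eq, ← h1]
    exact mul_lt_of_lt_one_right (pinv_pos hσ0 hσ1) (by linarith [hP.shift.shift.pphi_pos h2])
  · exact hP.shift.pphi_le_pinv.trans_lt (pinv_strictAnti hσ0 (by simpa using h0) h1)

lemma pphi_mem_Ioc (hP : IsPierce σ) {a : ℕ} (h0 : σ 0 = a)
    (hgap : ¬ (σ 1 = σ 0 + 1 ∧ σ 2 = ⊤)) : pphi σ ∈ Set.Ioc ((a + 1 : ℝ)⁻¹) (a : ℝ)⁻¹ := by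
  have ha : (0 : ℝ) < a := by exact_mod_cast Nat.pos_of_ne_zero (hP.ne_zero_of_apply_eq h0)
  have hE := hP.pphi_shift_lt (h0 ▸ ENat.natCast_ne_top a) hgap
  rw [h0, ← Nat.cast_add_one, pinv_natCast, Nat.cast_add_one] at hE
  refine ⟨?_, by simpa [h0] using hP.pphi_le_pinv⟩
  calc ((a : ℝ) + 1)⁻¹ = (a : ℝ)⁻¹ * (1 - ((a : ℝ) + 1)⁻¹) := by field_simp; ring
    _ < (a : ℝ)⁻¹ * (1 - pphi (fun k => σ (k + 1))) := by gcongr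
    _ = pphi σ := by rw [hP.pphi_eq, h0, pinv_natCast]

lemma not_realizable_of_endsInUnitStepAt (hP : IsPierce σ) {k : ℕ}
    (h : EndsInUnitStepAt σ k) : ¬ Realizable σ := by
  rintro ⟨x, -, hx⟩
  obtain ⟨hk, hk1, hk2⟩ := h
  obtain ⟨a, ha⟩ := WithTop.ne_top_iff_exists.mp hk
  refine pd1_pT_pT_ne_top (hP.ne_zero_of_apply_eq ha.symm) (y := pT^[k] x) ?_ ?_ ?_
  · rw [← pdig_succ, hx, ← ha]; rfl
  · rw [← Function.iterate_succ_apply' pT, ← pdig_succ, hx, hk1, ← ha]; rfl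
  · rw [← Function.iterate_succ_apply' pT, ← Function.iterate_succ_apply' pT, ← pdig_succ, hx]
    exact hk2

lemma pd1_pphi (hP : IsPierce σ) (hgap : ¬ EndsInUnitStepAt σ 0) : pd1 (pphi σ) = σ 0 := by
  induction h0 : σ 0 using ENat.recTopCoe with
  | top => simp [pphi_eq_zero_of_apply_zero_eq_top h0, pd1]
  | coe a =>
    exact (pd1_eq_natCast_iff (hP.ne_zero_of_apply_eq h0)).mpr
      (hP.pphi_mem_Ioc h0 fun h => hgap ⟨h0 ▸ ENat.natCast_ne_top a, h⟩)

lemma pT_pphi (hP : IsPierce σ) (hgap : ¬ EndsInUnitStepAt σ 0) :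
    pT (pphi σ) = pphi (fun k => σ (k + 1)) := by
  induction h0 : σ 0 using ENat.recTopCoe with
  | top =>
    have h1 : σ 1 = ⊤ := hP.eq_top_of_le h0 (Nat.zero_le 1)
    simp [pphi_eq_zero_of_apply_zero_eq_top h0,
      pphi_eq_zero_of_apply_zero_eq_top (σ := fun k => σ (k + 1)) h1, pT]
  | coe a =>
    have ha : (a : ℝ) ≠ 0 := Nat.cast_ne_zero.mpr (hP.ne_zero_of_apply_eq h0)
    rw [pT_eq_of_pd1_eq ((hP.pd1_pphi hgap).trans h0), hP.pphi_eq, h0, pinv_natCast]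
    field_simp
    ring

lemma pd1_iterate_pT_pphi (hP : IsPierce σ) (hgap : ∀ k, ¬ EndsInUnitStepAt σ k) (k : ℕ) :
    pd1 (pT^[k] (pphi σ)) = σ k := by
  induction k generalizing σ with
  | zero => exact hP.pd1_pphi (hgap 0)
  | succ k ih =>
    rw [Function.iterate_succ_apply, hP.pT_pphi (hgap 0)]
    exact ih hP.shift fun j => hgap (j + 1)

lemma realizable (hP : IsPierce σ) (hgap : ∀ k, ¬ EndsInUnitStepAt σ k) : Realizable σ :=
  ⟨pphi σ, ⟨hP.pphi_nonneg, hP.pphi_le_pinv.trans (pinv_le_one _)⟩,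
    hP.pd1_iterate_pT_pphi hgap⟩

lemma exists_endsInUnitStepAt_iff (hP : IsPierce σ) :
    (∃ k, EndsInUnitStepAt σ k) ↔ ∃ n : ℕ, 2 ≤ n ∧ (∀ k < n, σ k ≠ ⊤) ∧
      (∀ k, n ≤ k → σ k = ⊤) ∧ σ (n - 2) + 1 = σ (n - 1) := by
  constructor
  · rintro ⟨k, hk, hk1, hk2⟩
    have hk1' : σ (k + 1) ≠ ⊤ := by simpa [hk1] using hk
    refine ⟨k + 2, by omega, fun j hj ht => hk1' (hP.eq_top_of_le ht (by omega)),
      fun j hj => hP.eq_top_of_le hk2 hj, by simpa using hk1.symm⟩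
  · rintro ⟨n, hn, hfin, htop, h⟩
    refine ⟨n - 2, hfin _ (by omega), ?_, htop _ (by omega)⟩
    rw [show n - 2 + 1 = n - 1 by omega, h]

end IsPierce

theorem stmt5 (σ : ℕ → ℕ∞) (hP : IsPierce σ) :
    ¬ Realizable σ ↔
      ∃ n : ℕ, 2 ≤ n ∧ (∀ k < n, σ k ≠ ⊤) ∧ (∀ k, n ≤ k → σ k = ⊤) ∧
        σ (n - 2) + 1 = σ (n - 1) := by
  rw [← hP.exists_endsInUnitStepAt_iff]
  constructor
  · intro hnr
    by_contra! hgap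
    exact hnr (hP.realizable hgap)
  · rintro ⟨k, hk⟩
    exact hP.not_realizable_of_endsInUnitStepAt hk
end

section
/- For every Pierce sequence σ ∈ Σ, the error-sum E*(σ) = Σ_{n=1}^∞ (φ(σ) - φ_n(σ)) equals Σ_{n=1}^∞ (-1)^n · n / (σ_1···σ_{n+1}). -/
open scoped BigOperators

/-! The `n`-th error is the tail `Σ_{k>n} t_k` of the series `φ(σ) = Σ t_k`, and `σ_n ≥ n` gives
`|t_k| ≤ 1/k!`. Hence the double series `Σ_n Σ_{k>n} t_k` converges absolutely, and summing it
in the other order counts each `t_k` exactly `k - 1` times. -/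

open Finset

section TailSums

variable {E : Type*} [NormedAddCommGroup E]

lemma sigmaAntidiagonalEquivProd_fst_add_snd (x : Σ N : ℕ, antidiagonal N) :
    (HasAntidiagonal.sigmaAntidiagonalEquivProd x).1 +
      (HasAntidiagonal.sigmaAntidiagonalEquivProd x).2 = x.1 :=
  mem_antidiagonal.1 x.2.2

lemma summable_norm_sigma_antidiagonal {f : ℕ → E}
    (hf : Summable fun n : ℕ => (n : ℝ) * ‖f n‖) :
    Summable fun x : Σ N : ℕ, antidiagonal N => ‖f (x.1 + 1)‖ := by
  refine (summable_sigma_of_nonneg fun _ => norm_nonneg _).2 ⟨fun _ => .of_finite, ?_⟩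
  simpa [tsum_fintype, Nat.card_antidiagonal] using (summable_nat_add_iff 1).2 hf

theorem tsum_tsum_add_add_one_eq_tsum_nsmul [CompleteSpace E] {f : ℕ → E}
    (hf : Summable fun n : ℕ => (n : ℝ) * ‖f n‖) :
    ∑' n, ∑' k, f (n + k + 1) = ∑' n, (n + 1) • f (n + 1) := by
  have hsigma := (summable_norm_sigma_antidiagonal hf).of_norm
  have hprod : Summable fun p : ℕ × ℕ => f (p.1 + p.2 + 1) := by
    rw [← HasAntidiagonal.sigmaAntidiagonalEquivProd.summable_iff]
    simpa only [Function.comp_def, sigmaAntidiagonalEquivProd_fst_add_snd] using hsigma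
  rw [← hprod.tsum_prod' hprod.prod_factor, ← HasAntidiagonal.sigmaAntidiagonalEquivProd.tsum_eq]
  simp only [sigmaAntidiagonalEquivProd_fst_add_snd]
  rw [hsigma.tsum_sigma' fun _ => .of_finite]
  simp [tsum_fintype, Nat.card_antidiagonal]

end TailSums

lemma summable_inv_factorial : Summable fun n : ℕ => ((n.factorial : ℕ) : ℝ)⁻¹ := by
  simpa using Real.summable_pow_div_factorial 1

lemma pinv_le_inv_of_le {m : ℕ} {a : ℕ∞} (hm : 0 < m) (h : (m : ℕ∞) ≤ a) :
    pinv a ≤ (m : ℝ)⁻¹ := by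
  induction a using ENat.recTopCoe with
  | top => simp [pinv]
  | coe a =>
    rw [pinv, ENat.toNat_natCast]
    exact inv_anti₀ (by exact_mod_cast hm) (by exact_mod_cast h)

noncomputable def pphiTerm (σ : ℕ → ℕ∞) (k : ℕ) : ℝ :=
  (-1 : ℝ) ^ k * ∏ i ∈ range (k + 1), pinv (σ i)

lemma norm_pphiTerm (σ : ℕ → ℕ∞) (k : ℕ) :
    ‖pphiTerm σ k‖ = ∏ i ∈ range (k + 1), pinv (σ i) := by
  simp [pphiTerm, abs_of_nonneg, pinv_nonneg]

lemma pphi_sub_pphiN {σ : ℕ → ℕ∞} (h : Summable (pphiTerm σ)) (n : ℕ) :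
    pphi σ - pphiN n σ = ∑' k, pphiTerm σ (k + n) := by
  rw [sub_eq_iff_eq_add']
  exact (h.sum_add_tsum_nat_add n).symm

namespace IsPierce

variable {σ : ℕ → ℕ∞}

lemma succ_le (hσ : IsPierce σ) (n : ℕ) : ((n + 1 : ℕ) : ℕ∞) ≤ σ n := by
  induction n with
  | zero => simpa using hσ.1
  | succ n ih =>
    rcases hσ.2 n with hlt | ⟨-, htop⟩
    · exact Order.add_one_le_of_lt (ih.trans_lt hlt)
    · simp [htop]

lemma prod_pinv_le (hσ : IsPierce σ) (k : ℕ) :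
    ∏ i ∈ range k, pinv (σ i) ≤ ((k.factorial : ℕ) : ℝ)⁻¹ := by
  rw [← prod_range_add_one_eq_factorial, Nat.cast_prod, ← prod_inv_distrib]
  exact prod_le_prod (fun i _ => pinv_nonneg _)
    fun i _ => pinv_le_inv_of_le i.succ_pos (hσ.succ_le i)

lemma norm_pphiTerm_le (hσ : IsPierce σ) (k : ℕ) :
    ‖pphiTerm σ k‖ ≤ (((k + 1).factorial : ℕ) : ℝ)⁻¹ := by
  rw [norm_pphiTerm]
  exact hσ.prod_pinv_le (k + 1)

lemma summable_pphiTerm (hσ : IsPierce σ) : Summable (pphiTerm σ) :=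
  .of_norm_bounded ((summable_nat_add_iff 1).2 summable_inv_factorial) hσ.norm_pphiTerm_le

lemma summable_mul_norm_pphiTerm (hσ : IsPierce σ) :
    Summable fun k : ℕ => (k : ℝ) * ‖pphiTerm σ k‖ := by
  refine .of_nonneg_of_le (fun k => by positivity) (fun k => ?_) summable_inv_factorial
  calc (k : ℝ) * ‖pphiTerm σ k‖ ≤ k * (((k + 1).factorial : ℕ) : ℝ)⁻¹ := by
        gcongr; exact hσ.norm_pphiTerm_le k
    _ ≤ ((k.factorial : ℕ) : ℝ)⁻¹ := by
        rw [Nat.factorial_succ, Nat.cast_mul, mul_inv, ← mul_assoc]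
        refine mul_le_of_le_one_left (by positivity) ?_
        rw [← div_eq_mul_inv, div_le_one (by positivity)]
        push_cast; linarith

end IsPierce

theorem stmt10 (σ : ℕ → ℕ∞) (hσ : IsPierce σ) : pEstar σ = pEstarSeries σ := by
  calc pEstar σ = ∑' n, ∑' k, pphiTerm σ (n + k + 1) := tsum_congr fun n => by
        rw [pphi_sub_pphiN hσ.summable_pphiTerm]
        exact tsum_congr fun k => congrArg _ (by ring)
    _ = ∑' n, (n + 1) • pphiTerm σ (n + 1) :=
        tsum_tsum_add_add_one_eq_tsum_nsmul hσ.summable_mul_norm_pphiTerm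
    _ = pEstarSeries σ := tsum_congr fun n => by
        simp only [pphiTerm, nsmul_eq_mul]
        push_cast
        ring
end
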